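/- For a closed set Q ⊆ 2^ω and a string σ with μ(Q ∩ [σ]) > 0, for every ε < μ_σ(Q) there exists X ∈ Q ∩ [σ] with liminf_n μ_{X↾n}(Q) ≥ ε (existence of a point of lower density at least ε). -/
import Mathlib


open MeasureTheory Filter
open scoped ENNReal

/-- The cylinder of infinite binary sequences extending the finite string `τ`. -/
def cyl (τ : List Bool) : Set (ℕ → Bool) := {X | ∀ i : Fin τ.length, X i = τ.get i}

/-- Relative measure `μ_τ(P) = μ(P ∩ [τ]) / μ([τ])`. -/
noncomputable def relMeas (μ : Measure (ℕ → Bool)) (τ : List Bool)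
    (P : Set (ℕ → Bool)) : ℝ≥0∞ := μ (P ∩ cyl τ) / μ (cyl τ)

/-- The length-`n` prefix of an infinite binary sequence. -/
def pre (X : ℕ → Bool) (n : ℕ) : List Bool := List.ofFn fun i : Fin n => X i

lemma pre_length (X : ℕ → Bool) (n : ℕ) : (pre X n).length = n := by simp [pre]

lemma mem_cyl_iff (τ : List Bool) (X : ℕ → Bool) :
    X ∈ cyl τ ↔ ∀ i (h : i < τ.length), X i = τ[i] := by
  constructor
  · intro hX i h; exact hX ⟨i, h⟩
  · intro h i; exact h i i.2

lemma measurableSet_cyl (τ : List Bool) : MeasurableSet (cyl τ) := by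
  have : cyl τ = ⋂ i : Fin τ.length, (fun X : ℕ → Bool => X i) ⁻¹' {τ.get i} := by
    ext X; simp [cyl, Set.mem_iInter, Set.mem_preimage]
  rw [this]
  exact MeasurableSet.iInter fun i =>
    (measurable_pi_apply (i : ℕ)) (measurableSet_singleton _)

lemma mem_cyl_pre (X : ℕ → Bool) (n : ℕ) : X ∈ cyl (pre X n) := by
  rw [mem_cyl_iff]
  intro i h
  simp [pre]

lemma eq_pre_of_mem_cyl {X : ℕ → Bool} {τ : List Bool} (h : X ∈ cyl τ) :
    τ = pre X τ.length := by
  rw [mem_cyl_iff] at h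
  apply List.ext_getElem (by simp [pre_length])
  intro i h1 h2
  simp [pre, (h i h1).symm]

lemma cyl_mono {σ τ : List Bool} (h : σ <+: τ) : cyl τ ⊆ cyl σ := by
  intro X hX
  rw [mem_cyl_iff] at hX ⊢
  intro i hi
  rw [hX i (lt_of_lt_of_le hi h.length_le), h.getElem hi]

lemma pre_prefix_pre (X : ℕ → Bool) {m n : ℕ} (h : m ≤ n) : pre X m <+: pre X n := by
  rw [List.prefix_iff_eq_take]
  apply List.ext_getElem (by simp [pre_length, h])
  intro i h1 h2
  simp [pre]

lemma prefix_of_mem_cyl {X : ℕ → Bool} {σ τ : List Bool} (hσ : X ∈ cyl σ) (hτ : X ∈ cyl τ)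
    (h : σ.length ≤ τ.length) : σ <+: τ := by
  rw [eq_pre_of_mem_cyl hσ, eq_pre_of_mem_cyl hτ]
  exact pre_prefix_pre X h

lemma cyl_disjoint {τ₁ τ₂ : List Bool} (h₁ : ¬ τ₁ <+: τ₂) (h₂ : ¬ τ₂ <+: τ₁) :
    Disjoint (cyl τ₁) (cyl τ₂) := by
  rw [Set.disjoint_left]
  intro X hX1 hX2
  rcases le_total τ₁.length τ₂.length with h | h
  · exact h₁ (prefix_of_mem_cyl hX1 hX2 h)
  · exact h₂ (prefix_of_mem_cyl hX2 hX1 h)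

theorem stmt14 (μ : Measure (ℕ → Bool))
    (hμ : ∀ τ : List Bool, μ (cyl τ) = (2 : ℝ≥0∞)⁻¹ ^ τ.length)
    (Q : Set (ℕ → Bool)) (hQ : IsClosed Q) (σ : List Bool)
    (hpos : 0 < μ (Q ∩ cyl σ))
    (ε : ℝ≥0∞) (hε : ε < relMeas μ σ Q) :
    ∃ X ∈ Q ∩ cyl σ,
      ε ≤ Filter.liminf (fun n => relMeas μ (pre X n) Q) Filter.atTop := by
  classical
  have hcyl0 : ∀ τ : List Bool, μ (cyl τ) ≠ 0 := by
    intro τ; rw [hμ]; exact pow_ne_zero _ (ENNReal.inv_ne_zero.2 (by simp))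
  have hcyltop : ∀ τ : List Bool, μ (cyl τ) ≠ ∞ := by
    intro τ; rw [hμ]
    exact ENNReal.pow_ne_top (by simp)
  by_cases hgood : ∃ X ∈ Q ∩ cyl σ, ∀ n, σ.length ≤ n → ε ≤ relMeas μ (pre X n) Q
  · obtain ⟨X, hX, hg⟩ := hgood
    refine ⟨X, hX, Filter.le_liminf_of_le (by isBoundedDefault) ?_⟩
    exact Filter.eventually_atTop.2 ⟨σ.length, fun n hn => hg n hn⟩
  · exfalso
    push_neg at hgood
    -- the antichain of minimal "bad" extensions of σ
    set A : Set (List Bool) :=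
      {τ | σ <+: τ ∧ relMeas μ τ Q < ε ∧
        ∀ τ', σ <+: τ' → τ' <+: τ → τ' ≠ τ → ¬ (relMeas μ τ' Q < ε)} with hA
    -- covering
    have hcover : Q ∩ cyl σ ⊆ ⋃ τ ∈ A, Q ∩ cyl τ := by
      intro X hX
      obtain ⟨n, hn, hbad⟩ := hgood X hX
      have hP : ∃ m, σ.length ≤ m ∧ relMeas μ (pre X m) Q < ε := ⟨n, hn, hbad⟩
      set m := Nat.find hP with hm
      obtain ⟨hm1, hm2⟩ := Nat.find_spec hP
      have hXσ : X ∈ cyl σ := hX.2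
      refine Set.mem_biUnion (show pre X m ∈ A from ⟨?_, hm2, ?_⟩) ⟨hX.1, mem_cyl_pre X m⟩
      · rw [eq_pre_of_mem_cyl hXσ]; exact pre_prefix_pre X hm1
      · intro τ' hστ' hτ' hne hbad'
        have hXτ' : X ∈ cyl τ' := cyl_mono hτ' (mem_cyl_pre X m)
        have hlen : τ'.length ≤ m := by
          have := hτ'.length_le; rwa [pre_length] at this
        have hlt : τ'.length < m := by
          rcases lt_or_eq_of_le hlen with h | h
          · exact h
          · exact absurd (hτ'.eq_of_length (by rw [pre_length, h])) hne
        have := Nat.find_min hP hlt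
        rw [← eq_pre_of_mem_cyl hXτ'] at this
        exact this ⟨hστ'.length_le, hbad'⟩
    -- A is an antichain of extensions of σ, so the cylinders are pairwise disjoint
    have hdisj : A.PairwiseDisjoint cyl := by
      intro τ₁ h₁ τ₂ h₂ hne
      apply cyl_disjoint
      · intro hpre; exact h₂.2.2 τ₁ h₁.1 hpre hne h₁.2.1
      · intro hpre; exact h₁.2.2 τ₂ h₂.1 hpre (fun h => hne h.symm) h₂.2.1
    have hsub : (⋃ τ ∈ A, cyl τ) ⊆ cyl σ := by
      refine Set.iUnion₂_subset fun τ hτ => cyl_mono hτ.1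
    -- measure estimate
    have key : μ (Q ∩ cyl σ) ≤ ε * μ (cyl σ) := by
      calc μ (Q ∩ cyl σ) ≤ μ (⋃ τ ∈ A, Q ∩ cyl τ) := measure_mono hcover
        _ ≤ ∑' τ : A, μ (Q ∩ cyl τ) := measure_biUnion_le μ (A.to_countable) _
        _ ≤ ∑' τ : A, ε * μ (cyl (τ : List Bool)) := by
            apply ENNReal.tsum_le_tsum
            intro τ
            have hbad : relMeas μ (τ : List Bool) Q < ε := τ.2.2.1
            rw [relMeas, ENNReal.div_lt_iff (Or.inl (hcyl0 _)) (Or.inl (hcyltop _))] at hbad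
            exact hbad.le
        _ = ε * ∑' τ : A, μ (cyl (τ : List Bool)) := ENNReal.tsum_mul_left
        _ = ε * μ (⋃ τ ∈ A, cyl τ) := by
            rw [measure_biUnion (A.to_countable) hdisj fun τ _ => measurableSet_cyl τ]
        _ ≤ ε * μ (cyl σ) := mul_le_mul_right (measure_mono hsub) ε
    have : ε * μ (cyl σ) < μ (Q ∩ cyl σ) := by
      have := ENNReal.mul_lt_of_lt_div (c := μ (cyl σ)) hε
      exact this
    exact absurd key (not_le.2 this)
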